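/- Let p_D and p_{D'} be the joint densities of n independent Laplace random variables with scale d = Δ/ε centered at f(D)_i and f(D')_i respectively, where ∑_{i=1}^n |f(D)_i - f(D')_i| ≤ Δ. Then for every point q ∈ ℝⁿ, p_D(q) ≤ e^ε · p_{D'}(q). -/

import Mathlib

/-!
By the triangle inequality `|x - μ'| ≤ |x - μ| + |μ - μ'|`, moving the centre of a Laplace density
of scale `d` from `μ'` to `μ` multiplies it by at most `exp (|μ - μ'| / d)`. Multiplying over the
coordinates gives the factor `exp (‖f D - f D'‖₁ / d) ≤ exp (Δ / d) = exp ε`.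
-/

open Real Finset

noncomputable section

def laplacePDF (d μ x : ℝ) : ℝ := 1 / (2 * d) * exp (-|x - μ| / d)

lemma laplacePDF_nonneg {d : ℝ} (hd : 0 ≤ d) (μ x : ℝ) : 0 ≤ laplacePDF d μ x := by
  unfold laplacePDF
  positivity

lemma laplacePDF_le_exp_mul {d : ℝ} (hd : 0 < d) (μ μ' x : ℝ) :
    laplacePDF d μ x ≤ exp (|μ - μ'| / d) * laplacePDF d μ' x := by
  have hexp : exp (-|x - μ| / d) ≤ exp (|μ - μ'| / d) * exp (-|x - μ'| / d) := by
    rw [← exp_add, exp_le_exp, ← add_div, div_le_div_iff_of_pos_right hd]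
    linarith [abs_sub_le x μ μ']
  unfold laplacePDF
  calc 1 / (2 * d) * exp (-|x - μ| / d)
      ≤ 1 / (2 * d) * (exp (|μ - μ'| / d) * exp (-|x - μ'| / d)) := by gcongr
    _ = exp (|μ - μ'| / d) * (1 / (2 * d) * exp (-|x - μ'| / d)) := by ring

lemma prod_laplacePDF_le_exp_mul {ι : Type*} [Fintype ι] {d : ℝ} (hd : 0 < d)
    (x μ μ' : ι → ℝ) :
    ∏ i, laplacePDF d (μ i) (x i)
      ≤ exp ((∑ i, |μ i - μ' i|) / d) * ∏ i, laplacePDF d (μ' i) (x i) := by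
  calc ∏ i, laplacePDF d (μ i) (x i)
      ≤ ∏ i, exp (|μ i - μ' i| / d) * laplacePDF d (μ' i) (x i) :=
        prod_le_prod (fun i _ => laplacePDF_nonneg hd.le _ _)
          (fun i _ => laplacePDF_le_exp_mul hd _ _ _)
    _ = exp ((∑ i, |μ i - μ' i|) / d) * ∏ i, laplacePDF d (μ' i) (x i) := by
        rw [prod_mul_distrib, ← exp_sum, sum_div]

end

theorem laplace_mechanism_density_ratio (n : ℕ) (ε Δ : ℝ) (hε : 0 < ε) (hΔ : 0 < Δ)
    (fD fD' : Fin n → ℝ)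
    (hsens : ∑ i, |fD i - fD' i| ≤ Δ)
    (q : Fin n → ℝ) :
    (∏ i, (1 / (2 * (Δ / ε))) * Real.exp (-|q i - fD i| / (Δ / ε)))
      ≤ Real.exp ε *
        ∏ i, (1 / (2 * (Δ / ε))) * Real.exp (-|q i - fD' i| / (Δ / ε)) := by
  have hd : 0 < Δ / ε := div_pos hΔ hε
  have hratio : (∑ i, |fD i - fD' i|) / (Δ / ε) ≤ ε := by
    calc (∑ i, |fD i - fD' i|) / (Δ / ε) ≤ Δ / (Δ / ε) := by gcongr
      _ = ε := by field_simp
  calc ∏ i, laplacePDF (Δ / ε) (fD i) (q i)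
      ≤ exp ((∑ i, |fD i - fD' i|) / (Δ / ε)) * ∏ i, laplacePDF (Δ / ε) (fD' i) (q i) :=
        prod_laplacePDF_le_exp_mul hd q fD fD'
    _ ≤ exp ε * ∏ i, laplacePDF (Δ / ε) (fD' i) (q i) := by
        gcongr
        exact prod_nonneg fun i _ => laplacePDF_nonneg hd.le _ _
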